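/- Let H be an r-uniform multi-hypergraph (r ≥ 2) on a finite vertex set V, and consider a random orientation of its edges. Fix distinct vertices v₁, v₂ ∈ V. Let d₁ be the number of edges containing v₁ but not v₂, d₂ the number of edges containing v₂ but not v₁, and d₃ the number of edges containing both v₁ and v₂. Let I_{v₁}, I_{v₂} be the indicator random variables of the events that v₁, respectively v₂, have nonzero in-degree. Then E[I_{v₁}·I_{v₂}] − E[I_{v₁}]·E[I_{v₂}] = ((r−2)/r)^{d₃}·((r−1)/r)^{d₁+d₂} − ((r−1)/r)^{d₁+d₂+2d₃}. -/
import Mathlib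


open Finset

lemma sum_subtype_prod' {V : Type*} [Fintype V] [DecidableEq V] {m : ℕ} (E : Fin m → Finset V)
    (F : Fin m → V → ℝ) :
    ∑ f : {f : Fin m → V // ∀ i, f i ∈ E i}, ∏ i, F i (f.1 i) = ∏ i, ∑ x ∈ E i, F i x := by
  rw [Finset.prod_univ_sum]
  exact (Finset.sum_subtype (Fintype.piFinset E)
    (fun f => by simp [Fintype.mem_piFinset]) (fun f => ∏ i, F i (f i))).symm

/-- The indicator (as a real number) of the event that vertex `v` has nonzero
in-degree under the orientation `f` of the edges `E`. -/
noncomputable def indNonzeroIndeg {V : Type*} [DecidableEq V] {m : ℕ}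
    {E : Fin m → Finset V} (v : V) (f : {f : Fin m → V // ∀ i, f i ∈ E i}) : ℝ :=
  if ∃ i, f.1 i = v then 1 else 0

lemma ind_eq' {V : Type*} [DecidableEq V] {m : ℕ} {E : Fin m → Finset V} (v : V)
    (f : {f : Fin m → V // ∀ i, f i ∈ E i}) :
    indNonzeroIndeg v f = 1 - ∏ i, (if f.1 i = v then (0:ℝ) else 1) := by
  unfold indNonzeroIndeg
  by_cases h : ∃ i, f.1 i = v
  · obtain ⟨i, hi⟩ := h
    rw [if_pos ⟨i, hi⟩, Finset.prod_eq_zero (Finset.mem_univ i) (by simp [hi])]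
    ring
  · rw [if_neg h, Finset.prod_eq_one fun i _ =>
      if_neg (show ¬f.1 i = v from fun hi => h ⟨i, hi⟩)]
    ring

/-- Let `H` be an `r`-uniform multi-hypergraph with edges `E 0, …, E (m-1)` (each an
`r`-element subset of `V`, `r ≥ 2`), and consider a random orientation of its edges
(each orientation `f` has probability `1 / r ^ m`).  Fix distinct vertices `v₁ ≠ v₂`,
let `d₁` (resp. `d₂`) be the number of edges containing `v₁` but not `v₂`
(resp. `v₂` but not `v₁`), and let `d₃` be the number of edges containing both.
For the indicators `I_{v₁}, I_{v₂}` of the events of nonzero in-degree,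
`E[I_{v₁} I_{v₂}] - E[I_{v₁}] E[I_{v₂}]
  = ((r-2)/r)^{d₃} ((r-1)/r)^{d₁+d₂} - ((r-1)/r)^{d₁+d₂+2d₃}`. -/
theorem covariance_nonzero_indegree {V : Type*} [Fintype V] [DecidableEq V]
    (m r : ℕ) (hr : 2 ≤ r)
    (E : Fin m → Finset V) (hE : ∀ i, (E i).card = r)
    (v₁ v₂ : V) (hv : v₁ ≠ v₂) :
    (∑ f : {f : Fin m → V // ∀ i, f i ∈ E i},
        ((1 : ℝ) / r ^ m) * (indNonzeroIndeg v₁ f * indNonzeroIndeg v₂ f)) -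
      (∑ f : {f : Fin m → V // ∀ i, f i ∈ E i},
          ((1 : ℝ) / r ^ m) * indNonzeroIndeg v₁ f) *
        (∑ f : {f : Fin m → V // ∀ i, f i ∈ E i},
            ((1 : ℝ) / r ^ m) * indNonzeroIndeg v₂ f) =
      (((r : ℝ) - 2) / r) ^ (Finset.univ.filter fun i => v₁ ∈ E i ∧ v₂ ∈ E i).card *
          (((r : ℝ) - 1) / r) ^
            ((Finset.univ.filter fun i => v₁ ∈ E i ∧ v₂ ∉ E i).card +
              (Finset.univ.filter fun i => v₂ ∈ E i ∧ v₁ ∉ E i).card) -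
        (((r : ℝ) - 1) / r) ^
          ((Finset.univ.filter fun i => v₁ ∈ E i ∧ v₂ ∉ E i).card +
            (Finset.univ.filter fun i => v₂ ∈ E i ∧ v₁ ∉ E i).card +
            2 * (Finset.univ.filter fun i => v₁ ∈ E i ∧ v₂ ∈ E i).card) := by

  have hr0 : (r : ℝ) ≠ 0 := by
    exact Nat.cast_ne_zero.mpr (by omega)
  set d₁ := (Finset.univ.filter fun i : Fin m => v₁ ∈ E i ∧ v₂ ∉ E i).card with hd₁
  set d₂ := (Finset.univ.filter fun i : Fin m => v₂ ∈ E i ∧ v₁ ∉ E i).card with hd₂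
  set d₃ := (Finset.univ.filter fun i : Fin m => v₁ ∈ E i ∧ v₂ ∈ E i).card with hd₃
  set q : ℝ := ((r : ℝ) - 1) / r with hq
  set p : ℝ := ((r : ℝ) - 2) / r with hp
  set P₁ : {f : Fin m → V // ∀ i, f i ∈ E i} → ℝ :=
    fun f => ∏ i, (if f.1 i = v₁ then (0:ℝ) else 1) with hP₁
  set P₂ : {f : Fin m → V // ∀ i, f i ∈ E i} → ℝ :=
    fun f => ∏ i, (if f.1 i = v₂ then (0:ℝ) else 1) with hP₂
  -- cardinality of filter for a single vertex
  have hdeg₁ : (Finset.univ.filter fun i : Fin m => v₁ ∈ E i).card = d₁ + d₃ := by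
    have h := Finset.card_filter_add_card_filter_not
      (s := Finset.univ.filter fun i : Fin m => v₁ ∈ E i) (p := fun i => v₂ ∈ E i)
    rw [Finset.filter_filter, Finset.filter_filter] at h
    rw [hd₁, hd₃]
    omega
  have hdeg₂ : (Finset.univ.filter fun i : Fin m => v₂ ∈ E i).card = d₂ + d₃ := by
    have h := Finset.card_filter_add_card_filter_not
      (s := Finset.univ.filter fun i : Fin m => v₂ ∈ E i) (p := fun i => v₁ ∈ E i)
    rw [Finset.filter_filter, Finset.filter_filter] at h
    have hcomm : (Finset.univ.filter fun a : Fin m => v₂ ∈ E a ∧ v₁ ∈ E a)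
        = (Finset.univ.filter fun i : Fin m => v₁ ∈ E i ∧ v₂ ∈ E i) := by
      ext x; simp [and_comm]
    rw [hcomm] at h
    rw [hd₂, hd₃]
    omega
  -- single-vertex sums
  have key : ∀ v : V, ∑ f : {f : Fin m → V // ∀ i, f i ∈ E i},
      ((1:ℝ)/r^m) * ∏ i, (if f.1 i = v then (0:ℝ) else 1)
      = q ^ (Finset.univ.filter fun i : Fin m => v ∈ E i).card := by
    intro v
    rw [← Finset.mul_sum, sum_subtype_prod' E (fun i x => if x = v then (0:ℝ) else 1)]
    have hs : ∀ i, ∑ x ∈ E i, (if x = v then (0:ℝ) else 1)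
        = (r : ℝ) - (if v ∈ E i then 1 else 0) := by
      intro i
      have : ∀ x : V, (if x = v then (0:ℝ) else 1) = 1 - (if x = v then 1 else 0) := by
        intro x; by_cases h : x = v <;> simp [h]
      rw [Finset.sum_congr rfl fun x _ => this x, Finset.sum_sub_distrib,
        Finset.sum_const, hE i, Finset.sum_ite_eq' (E i) v (fun _ => (1:ℝ))]
      simp
    rw [Finset.prod_congr rfl fun i _ => hs i]
    have h1 : ((1:ℝ)/r^m) = ∏ _i : Fin m, ((1:ℝ)/r) := by
      simp [Finset.prod_const, one_div, ← inv_pow]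
    rw [h1, ← Finset.prod_mul_distrib]
    have h2 : ∀ i : Fin m, (1:ℝ)/r * ((r:ℝ) - (if v ∈ E i then 1 else 0))
        = q ^ (if v ∈ E i then 1 else 0) := by
      intro i
      by_cases h : v ∈ E i <;> simp [h, hq] <;> field_simp
    rw [Finset.prod_congr rfl fun i _ => h2 i, Finset.prod_pow_eq_pow_sum]
    congr 1
    rw [Finset.card_filter]
  have S1 : ∑ f : {f : Fin m → V // ∀ i, f i ∈ E i}, ((1:ℝ)/r^m) * P₁ f = q ^ (d₁ + d₃) := by
    rw [hP₁]; rw [key v₁, hdeg₁]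
  have S2 : ∑ f : {f : Fin m → V // ∀ i, f i ∈ E i}, ((1:ℝ)/r^m) * P₂ f = q ^ (d₂ + d₃) := by
    rw [hP₂]; rw [key v₂, hdeg₂]
  -- joint sum
  have S12 : ∑ f : {f : Fin m → V // ∀ i, f i ∈ E i}, ((1:ℝ)/r^m) * (P₁ f * P₂ f)
      = p ^ d₃ * q ^ (d₁ + d₂) := by
    have hmul : ∀ f : {f : Fin m → V // ∀ i, f i ∈ E i},
        P₁ f * P₂ f = ∏ i, (if f.1 i = v₁ ∨ f.1 i = v₂ then (0:ℝ) else 1) := by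
      intro f
      rw [hP₁, hP₂, ← Finset.prod_mul_distrib]
      refine Finset.prod_congr rfl fun i _ => ?_
      by_cases h1 : f.1 i = v₁ <;> by_cases h2 : f.1 i = v₂ <;> simp [h1, h2]
    rw [Finset.sum_congr rfl fun f _ => by rw [hmul f]]
    rw [← Finset.mul_sum, sum_subtype_prod' E (fun i x => if x = v₁ ∨ x = v₂ then (0:ℝ) else 1)]
    have hs : ∀ i, ∑ x ∈ E i, (if x = v₁ ∨ x = v₂ then (0:ℝ) else 1)
        = (r : ℝ) - (if v₁ ∈ E i then 1 else 0) - (if v₂ ∈ E i then 1 else 0) := by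
      intro i
      have hpt : ∀ x : V, (if x = v₁ ∨ x = v₂ then (0:ℝ) else 1)
          = 1 - (if x = v₁ then 1 else 0) - (if x = v₂ then 1 else 0) := by
        intro x
        by_cases h1 : x = v₁ <;> by_cases h2 : x = v₂ <;>
          simp_all [h1, h2]
      rw [Finset.sum_congr rfl fun x _ => hpt x]
      rw [Finset.sum_sub_distrib, Finset.sum_sub_distrib, Finset.sum_const, hE i,
        Finset.sum_ite_eq' (E i) v₁ (fun _ => (1:ℝ)),
        Finset.sum_ite_eq' (E i) v₂ (fun _ => (1:ℝ))]
      simp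
    rw [Finset.prod_congr rfl fun i _ => hs i]
    have h1 : ((1:ℝ)/r^m) = ∏ _i : Fin m, ((1:ℝ)/r) := by
      simp [Finset.prod_const, one_div, ← inv_pow]
    rw [h1, ← Finset.prod_mul_distrib]
    have h2 : ∀ i : Fin m, (1:ℝ)/r * ((r:ℝ) - (if v₁ ∈ E i then 1 else 0)
        - (if v₂ ∈ E i then 1 else 0))
        = p ^ (if v₁ ∈ E i ∧ v₂ ∈ E i then 1 else 0)
          * q ^ (if (v₁ ∈ E i ∧ v₂ ∉ E i) ∨ (v₂ ∈ E i ∧ v₁ ∉ E i) then 1 else 0) := by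
      intro i
      by_cases h1 : v₁ ∈ E i <;> by_cases h2 : v₂ ∈ E i <;>
        simp [h1, h2, hp, hq] <;> field_simp <;> ring
    rw [Finset.prod_congr rfl fun i _ => h2 i, Finset.prod_mul_distrib,
      Finset.prod_pow_eq_pow_sum, Finset.prod_pow_eq_pow_sum]
    have ha : ∑ i : Fin m, (if v₁ ∈ E i ∧ v₂ ∈ E i then 1 else 0) = d₃ := by
      rw [hd₃, Finset.card_filter]
    have hb : ∑ i : Fin m, (if (v₁ ∈ E i ∧ v₂ ∉ E i) ∨ (v₂ ∈ E i ∧ v₁ ∉ E i) then 1 else 0)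
        = d₁ + d₂ := by
      rw [← Finset.card_filter, Finset.filter_or, Finset.card_union_of_disjoint]
      rw [Finset.disjoint_filter]
      tauto
    rw [ha, hb]
  -- total mass
  have S0 : ∑ _f : {f : Fin m → V // ∀ i, f i ∈ E i}, ((1:ℝ)/r^m) = 1 := by
    have h := sum_subtype_prod' E (fun _ _ => (1:ℝ))
    simp only [Finset.prod_const_one, Finset.sum_const, hE, nsmul_eq_mul, mul_one,
      Finset.prod_const, Finset.card_univ, Fintype.card_fin] at h ⊢
    rw [h, mul_one_div, div_self (pow_ne_zero m hr0)]
  have e1 : ∑ f : {f : Fin m → V // ∀ i, f i ∈ E i}, ((1:ℝ)/r^m) * indNonzeroIndeg v₁ f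
      = 1 - q ^ (d₁ + d₃) := by
    have h : ∀ f : {f : Fin m → V // ∀ i, f i ∈ E i},
        ((1:ℝ)/r^m) * indNonzeroIndeg v₁ f = (1:ℝ)/r^m - ((1:ℝ)/r^m) * P₁ f := by
      intro f; rw [ind_eq' v₁ f, hP₁]; ring
    rw [Finset.sum_congr rfl fun f _ => h f, Finset.sum_sub_distrib, S0, S1]
  have e2 : ∑ f : {f : Fin m → V // ∀ i, f i ∈ E i}, ((1:ℝ)/r^m) * indNonzeroIndeg v₂ f
      = 1 - q ^ (d₂ + d₃) := by
    have h : ∀ f : {f : Fin m → V // ∀ i, f i ∈ E i},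
        ((1:ℝ)/r^m) * indNonzeroIndeg v₂ f = (1:ℝ)/r^m - ((1:ℝ)/r^m) * P₂ f := by
      intro f; rw [ind_eq' v₂ f, hP₂]; ring
    rw [Finset.sum_congr rfl fun f _ => h f, Finset.sum_sub_distrib, S0, S2]
  have e12 : ∑ f : {f : Fin m → V // ∀ i, f i ∈ E i},
      ((1:ℝ)/r^m) * (indNonzeroIndeg v₁ f * indNonzeroIndeg v₂ f)
      = 1 - q ^ (d₁ + d₃) - q ^ (d₂ + d₃) + p ^ d₃ * q ^ (d₁ + d₂) := by
    have h : ∀ f : {f : Fin m → V // ∀ i, f i ∈ E i},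
        ((1:ℝ)/r^m) * (indNonzeroIndeg v₁ f * indNonzeroIndeg v₂ f)
        = (1:ℝ)/r^m - ((1:ℝ)/r^m) * P₁ f - ((1:ℝ)/r^m) * P₂ f
          + ((1:ℝ)/r^m) * (P₁ f * P₂ f) := by
      intro f; rw [ind_eq' v₁ f, ind_eq' v₂ f, hP₁, hP₂]; ring
    rw [Finset.sum_congr rfl fun f _ => h f, Finset.sum_add_distrib,
      Finset.sum_sub_distrib, Finset.sum_sub_distrib, S0, S1, S2, S12]
  rw [e1, e2, e12]
  have hq2 : q ^ (d₁ + d₃) * q ^ (d₂ + d₃) = q ^ (d₁ + d₂ + 2 * d₃) := by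
    rw [← pow_add]; congr 1; omega
  have hring : (1 - q ^ (d₁ + d₃) - q ^ (d₂ + d₃) + p ^ d₃ * q ^ (d₁ + d₂))
      - (1 - q ^ (d₁ + d₃)) * (1 - q ^ (d₂ + d₃))
      = p ^ d₃ * q ^ (d₁ + d₂) - q ^ (d₁ + d₃) * q ^ (d₂ + d₃) := by ring
  rw [hring, hq2]
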